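/- The policy π* defined by π*_n(a|x_{<n}) = γ*_n(a|x_{<n}) is a well-defined policy, its induced joint density satisfies π*(x) = γ*(x) for all x ∈ 𝕏, and its maximum-entropy value equals the log-normalizer: V^{π*} = log Z. -/

import Mathlib

noncomputable section

/-- The unnormalized target density `γ̂(x) = exp (∑ₙ Rₙ(x_{≤n}))` (steps are
`0`-indexed, so `n : Fin N` corresponds to step `n+1`). -/
def gammaHat (N K : ℕ) (R : (n : Fin N) → (Fin (n.1 + 1) → Fin K) → ℝ)
    (x : Fin N → Fin K) : ℝ :=
  Real.exp (∑ n : Fin N, R n (fun i => x (Fin.castLE n.isLt i)))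

/-- The normalizer `Z = ∑ₓ γ̂(x)`. -/
def Z (N K : ℕ) (R : (n : Fin N) → (Fin (n.1 + 1) → Fin K) → ℝ) : ℝ :=
  ∑ x : Fin N → Fin K, gammaHat N K R x

/-- The normalized target density `γ*(x) = γ̂(x) / Z`. -/
def gammaStar (N K : ℕ) (R : (n : Fin N) → (Fin (n.1 + 1) → Fin K) → ℝ)
    (x : Fin N → Fin K) : ℝ :=
  gammaHat N K R x / Z N K R

/-- The conditional density of the target:
`γ*ₙ(a | x_{<n}) = (∑_{y : y_{≤n} = x_{<n}∘a} γ*(y)) / (∑_{y : y_{<n} = x_{<n}} γ*(y))`. -/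
def condStar (N K : ℕ) (R : (n : Fin N) → (Fin (n.1 + 1) → Fin K) → ℝ)
    (n : Fin N) (xp : Fin n.1 → Fin K) (a : Fin K) : ℝ :=
  (∑ y ∈ Finset.univ.filter (fun y : Fin N → Fin K =>
      (fun i : Fin (n.1 + 1) => y (Fin.castLE n.isLt i)) = Fin.snoc xp a),
      gammaStar N K R y) /
  (∑ y ∈ Finset.univ.filter (fun y : Fin N → Fin K =>
      (fun i : Fin n.1 => y (Fin.castLE n.isLt.le i)) = xp),
      gammaStar N K R y)

/-- The joint density induced by a policy: `π(x) = ∏ₙ πₙ(xₙ | x_{<n})`. -/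
def piJoint (N K : ℕ) (π : (n : Fin N) → (Fin n.1 → Fin K) → Fin K → ℝ)
    (x : Fin N → Fin K) : ℝ :=
  ∏ n : Fin N, π n (fun i => x (Fin.castLE n.isLt.le i)) (x n)

/-!
Write `M_m(p) = ∑_{y ⊇ p} γ*(y)` for the mass of all completions of a prefix `p` of length `m`,
so that `γ*ₙ(a | p) = M_{n+1}(p ∘ a) / M_n(p)`. Summing `M_{n+1}(p ∘ a)` over the last letter
`a` gives back `M_n(p)`, hence each conditional is a probability mass function. Along a fixed
`x` the product of the conditionals telescopes to `M_N(x) / M_0 = γ*(x) / ∑ γ* = γ*(x)`.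
Then `log γ̂ - log π* = log Z` pointwise, and `V^{π*} = log Z · ∑ γ* = log Z`.
-/

open Finset

theorem Finset.prod_range_div_of_ne_zero {G₀ : Type*} [CommGroupWithZero G₀] (f : ℕ → G₀)
    (hf : ∀ i, f i ≠ 0) (n : ℕ) : ∏ i ∈ range n, f (i + 1) / f i = f n / f 0 := by
  induction n with
  | zero => simp [div_self (hf 0)]
  | succ n ih => rw [prod_range_succ, ih, mul_comm, div_mul_div_cancel₀ (hf n)]

section PrefixMass

variable {N : ℕ} {α : Type*}

theorem Fin.castLE_succ_eq_snoc_iff {m : ℕ} (hm : m < N) (p : Fin m → α) (a : α)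
    (y : Fin N → α) :
    (fun i : Fin (m + 1) => y (Fin.castLE hm i)) = Fin.snoc p a ↔
      (fun i : Fin m => y (Fin.castLE hm.le i)) = p ∧ y ⟨m, hm⟩ = a := by
  constructor
  · intro h
    exact ⟨funext fun i => by simpa using congrFun h i.castSucc,
      (congrFun h (Fin.last m)).trans (Fin.snoc_last _ _)⟩
  · rintro ⟨rfl, rfl⟩
    funext i
    refine Fin.lastCases ?_ (fun j => ?_) i
    · rw [Fin.snoc_last]; rfl
    · simp

theorem Fin.exists_castLE_eq [Nonempty α] {m : ℕ} (hm : m ≤ N) (p : Fin m → α) :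
    ∃ x : Fin N → α, (fun i => x (Fin.castLE hm i)) = p :=
  ⟨fun j => if h : j.1 < m then p ⟨j, h⟩ else Classical.arbitrary α, funext fun i => by simp⟩

variable [Fintype α] [DecidableEq α] (w : (Fin N → α) → ℝ)

def prefixMass (m : ℕ) (hm : m ≤ N) (p : Fin m → α) : ℝ :=
  ∑ y ∈ univ.filter (fun y : Fin N → α => (fun i : Fin m => y (Fin.castLE hm i)) = p), w y

theorem sum_prefixMass_snoc {m : ℕ} (hm : m < N) (p : Fin m → α) :
    ∑ a, prefixMass w (m + 1) hm (Fin.snoc p a) = prefixMass w m hm.le p := by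
  simp only [prefixMass, sum_filter, Fin.castLE_succ_eq_snoc_iff]
  rw [sum_comm]
  refine sum_congr rfl fun y _ => ?_
  split_ifs with hy <;> simp [hy]

theorem prefixMass_zero (p : Fin 0 → α) : prefixMass w 0 (Nat.zero_le N) p = ∑ y, w y := by
  simp [prefixMass, Subsingleton.elim _ p]

theorem prefixMass_self (x : Fin N → α) : prefixMass w N le_rfl x = w x := by
  rw [prefixMass, sum_filter]
  exact (sum_ite_eq' univ x w).trans (if_pos (mem_univ x))

variable {w}

theorem prefixMass_nonneg (hw : ∀ y, 0 ≤ w y) {m : ℕ} (hm : m ≤ N) (p : Fin m → α) :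
    0 ≤ prefixMass w m hm p :=
  sum_nonneg fun y _ => hw y

theorem prefixMass_restrict_pos (hw : ∀ y, 0 < w y) {m : ℕ} (hm : m ≤ N) (x : Fin N → α) :
    0 < prefixMass w m hm (fun i => x (Fin.castLE hm i)) :=
  sum_pos (fun y _ => hw y) ⟨x, by simp⟩

theorem prefixMass_pos [Nonempty α] (hw : ∀ y, 0 < w y) {m : ℕ} (hm : m ≤ N)
    (p : Fin m → α) : 0 < prefixMass w m hm p := by
  obtain ⟨x, rfl⟩ := Fin.exists_castLE_eq hm p
  exact prefixMass_restrict_pos hw hm x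

variable (w)

def prefixCond (n : Fin N) (p : Fin n.1 → α) (a : α) : ℝ :=
  prefixMass w (n.1 + 1) n.isLt (Fin.snoc p a) / prefixMass w n.1 n.isLt.le p

variable {w}

theorem prefixCond_nonneg (hw : ∀ y, 0 ≤ w y) (n : Fin N) (p : Fin n.1 → α) (a : α) :
    0 ≤ prefixCond w n p a :=
  div_nonneg (prefixMass_nonneg hw _ _) (prefixMass_nonneg hw _ _)

theorem sum_prefixCond [Nonempty α] (hw : ∀ y, 0 < w y) (n : Fin N) (p : Fin n.1 → α) :
    ∑ a, prefixCond w n p a = 1 := by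
  simp only [prefixCond]
  rw [← sum_div, sum_prefixMass_snoc, div_self (prefixMass_pos hw _ _).ne']

end PrefixMass

theorem piJoint_prefixCond {N K : ℕ} {w : (Fin N → Fin K) → ℝ} (hw : ∀ y, 0 < w y)
    (x : Fin N → Fin K) : piJoint N K (prefixCond w) x = w x / ∑ y, w y := by
  let T : ℕ → ℝ := fun m =>
    if hm : m ≤ N then prefixMass w m hm (fun i => x (Fin.castLE hm i)) else 1
  have hT : ∀ m (hm : m ≤ N), T m = prefixMass w m hm (fun i => x (Fin.castLE hm i)) :=
    fun m hm => dif_pos hm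
  have hT_ne : ∀ m, T m ≠ 0 := by
    intro m
    by_cases hm : m ≤ N
    · exact hT m hm ▸ (prefixMass_restrict_pos hw hm x).ne'
    · simp [T, hm]
  calc piJoint N K (prefixCond w) x = ∏ n ∈ range N, T (n + 1) / T n := by
        rw [piJoint, ← Fin.prod_univ_eq_prod_range (fun n => T (n + 1) / T n)]
        refine prod_congr rfl fun n _ => ?_
        rw [prefixCond, hT _ n.isLt, hT _ n.isLt.le,
          (Fin.castLE_succ_eq_snoc_iff n.isLt _ (x n) x).2 ⟨rfl, rfl⟩]
    _ = w x / ∑ y, w y := by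
        rw [prod_range_div_of_ne_zero T hT_ne, hT N le_rfl, hT 0 (Nat.zero_le N),
          prefixMass_zero]
        exact congrArg (· / _) (prefixMass_self w x)

section Target

variable {N K : ℕ} (R : (n : Fin N) → (Fin (n.1 + 1) → Fin K) → ℝ)

theorem gammaHat_pos (x : Fin N → Fin K) : 0 < gammaHat N K R x :=
  Real.exp_pos _

theorem Z_pos [NeZero K] : 0 < Z N K R :=
  sum_pos (fun x _ => gammaHat_pos R x) univ_nonempty

theorem gammaStar_pos [NeZero K] (x : Fin N → Fin K) : 0 < gammaStar N K R x :=
  div_pos (gammaHat_pos R x) (Z_pos R)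

theorem sum_gammaStar [NeZero K] : ∑ x, gammaStar N K R x = 1 := by
  simp only [gammaStar]
  rw [← sum_div]
  exact div_self (Z_pos R).ne'

theorem log_gammaHat_sub_log_gammaStar [NeZero K] (x : Fin N → Fin K) :
    Real.log (gammaHat N K R x) - Real.log (gammaStar N K R x) = Real.log (Z N K R) := by
  rw [gammaStar, Real.log_div (gammaHat_pos R x).ne' (Z_pos R).ne', sub_sub_cancel]

theorem condStar_eq_prefixCond : condStar N K R = prefixCond (gammaStar N K R) :=
  rfl

end Target

theorem target_conditionals_optimal_policy_general (N K : ℕ) (hK : 0 < K)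
    (R : (n : Fin N) → (Fin (n.1 + 1) → Fin K) → ℝ) :
    (∀ (n : Fin N) (xp : Fin n.1 → Fin K) (a : Fin K), 0 ≤ condStar N K R n xp a) ∧
    (∀ (n : Fin N) (xp : Fin n.1 → Fin K), ∑ a, condStar N K R n xp a = 1) ∧
    (∀ x : Fin N → Fin K, piJoint N K (condStar N K R) x = gammaStar N K R x) ∧
    (∑ x : Fin N → Fin K,
        piJoint N K (condStar N K R) x *
          (Real.log (gammaHat N K R x) - Real.log (piJoint N K (condStar N K R) x)) =
      Real.log (Z N K R)) := by
  have : NeZero K := ⟨hK.ne'⟩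
  have hpos := gammaStar_pos R
  have hjoint (x : Fin N → Fin K) : piJoint N K (condStar N K R) x = gammaStar N K R x := by
    rw [condStar_eq_prefixCond, piJoint_prefixCond hpos, sum_gammaStar, div_one]
  refine ⟨fun n xp a => prefixCond_nonneg (fun y => (hpos y).le) n xp a,
    sum_prefixCond hpos, hjoint, ?_⟩
  simp_rw [hjoint, log_gammaHat_sub_log_gammaStar, ← sum_mul, sum_gammaStar, one_mul]

/-- **The target conditionals form the optimal policy.**
The policy `π*ₙ(a|x_{<n}) = γ*ₙ(a|x_{<n})` is a well-defined policy (each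
conditional is a probability mass function on `Fin K`), its induced joint
density equals `γ*`, and its maximum-entropy value
`V^{π*} = ∑ₓ π*(x)·(log γ̂(x) − log π*(x))` equals `log Z`. -/
theorem target_conditionals_optimal_policy (N K : ℕ) (hN : 0 < N) (hK : 0 < K)
    (R : (n : Fin N) → (Fin (n.1 + 1) → Fin K) → ℝ) :
    (∀ (n : Fin N) (xp : Fin n.1 → Fin K) (a : Fin K), 0 ≤ condStar N K R n xp a) ∧
    (∀ (n : Fin N) (xp : Fin n.1 → Fin K), ∑ a, condStar N K R n xp a = 1) ∧
    (∀ x : Fin N → Fin K, piJoint N K (condStar N K R) x = gammaStar N K R x) ∧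
    (∑ x : Fin N → Fin K,
        piJoint N K (condStar N K R) x *
          (Real.log (gammaHat N K R x) - Real.log (piJoint N K (condStar N K R) x)) =
      Real.log (Z N K R)) :=
  target_conditionals_optimal_policy_general N K hK R
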